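/- Let ω be C¹ near t with ω(t) ≠ 0, and set β₊(Δt) = ∫_t^{t+Δt} ω(τ)dτ and β₋(Δt) = −∫_t^{t−Δt} ω(τ)dτ. Then lim_{Δt→0⁺} (1/Δt)·ln(sin β₊(Δt)/sin β₋(Δt)) = ω̇(t)/ω(t). -/

import Mathlib

/-!
Write `F x = ∫ τ in t..x, ω τ`, so that `β₊ h = F (t + h)` and `β₋ h = -F (t - h)`. As `F' = ω`
near `t` and `ω` is differentiable at `t`, the second-order Taylor expansion of `F` gives
`β₊ - β₋ = ω̇(t) h² + o(h²)` and `β₋ = ω(t) h + o(h)`. Replacing `sin β` by `β` costs only `O(h³)`,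
so `sin β₊ / sin β₋ = 1 + (ω̇(t) / ω(t)) h + o(h)`, and `log (1 + x) = x + o(x)` concludes.
-/

open Real Filter Asymptotics Topology

section

variable {α : Type*} {l : Filter α}

theorem tendsto_log_div_of_tendsto_sub_one_div {u v : α → ℝ} {L : ℝ}
    (hv : Tendsto v l (𝓝 0)) (hv0 : ∀ᶠ x in l, v x ≠ 0)
    (h : Tendsto (fun x => (u x - 1) / v x) l (𝓝 L)) :
    Tendsto (fun x => log (u x) / v x) l (𝓝 L) := by
  have hO : (fun x => u x - 1) =O[l] v :=
    isBigO_of_div_tendsto_nhds (hv0.mono fun x hx h0 => absurd h0 hx) L h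
  have hu : Tendsto u l (𝓝 1) := by
    simpa using (hO.trans_tendsto hv).const_add 1
  have hlog : (fun y => log y - (y - 1)) =o[𝓝 1] fun y => y - 1 := by
    simpa using (hasDerivAt_log one_ne_zero).isLittleO
  have := ((hlog.comp_tendsto hu).trans_isBigO hO).tendsto_div_nhds_zero.add h
  rw [zero_add] at this
  refine this.congr fun x => ?_
  simp only [Function.comp_apply]
  ring

theorem tendsto_log_div_div {f g h : α → ℝ} {a b : ℝ}
    (hh : Tendsto h l (𝓝 0)) (hh0 : ∀ᶠ x in l, h x ≠ 0)
    (hfg : Tendsto (fun x => (f x - g x) / h x ^ 2) l (𝓝 a))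
    (hg : Tendsto (fun x => g x / h x) l (𝓝 b)) (hb : b ≠ 0) :
    Tendsto (fun x => log (f x / g x) / h x) l (𝓝 (a / b)) := by
  have hg0 : ∀ᶠ x in l, g x ≠ 0 :=
    (hg.eventually_ne hb).mono fun x hx h0 => hx (by simp [h0])
  refine tendsto_log_div_of_tendsto_sub_one_div hh hh0 ((hfg.div hg hb).congr' ?_)
  filter_upwards [hh0, hg0] with x hx hgx
  simp only [Pi.div_apply]
  field_simp

theorem tendsto_sin_sub_div_sq {β h : α → ℝ} (hh : Tendsto h l (𝓝 0)) (hβ : β =O[l] h) :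
    Tendsto (fun x => (sin (β x) - β x) / h x ^ 2) l (𝓝 0) := by
  have hsin : (fun x => sin (β x) - β x) =O[l] fun x => β x ^ 3 :=
    IsBigO.of_bound (1 / 6) (.of_forall fun x => by
      simpa [abs_sub_comm, div_eq_inv_mul] using abs_sub_sin_le (β x))
  have hcube : (fun x => h x ^ 3) =o[l] fun x => h x ^ 2 :=
    (isLittleO_pow_pow (by norm_num)).comp_tendsto hh
  exact ((hsin.trans (hβ.pow 3)).trans_isLittleO hcube).tendsto_div_nhds_zero

theorem tendsto_log_sin_div_sin_div {β₁ β₂ h : α → ℝ} {a b : ℝ}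
    (hh : Tendsto h l (𝓝 0)) (hh0 : ∀ᶠ x in l, h x ≠ 0) (h₁ : β₁ =O[l] h)
    (h₂ : Tendsto (fun x => β₂ x / h x) l (𝓝 b)) (hb : b ≠ 0)
    (h₁₂ : Tendsto (fun x => (β₁ x - β₂ x) / h x ^ 2) l (𝓝 a)) :
    Tendsto (fun x => log (sin (β₁ x) / sin (β₂ x)) / h x) l (𝓝 (a / b)) := by
  have hO₂ : β₂ =O[l] h :=
    isBigO_of_div_tendsto_nhds (hh0.mono fun x hx h0 => absurd h0 hx) b h₂
  have hs₁ := tendsto_sin_sub_div_sq hh h₁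
  have hs₂ := tendsto_sin_sub_div_sq hh hO₂
  refine tendsto_log_div_div hh hh0 ?_ ?_ hb
  · simpa using (h₁₂.add hs₁).sub hs₂ |>.congr fun x => by ring
  · simpa using (h₂.add (hs₂.mul hh)).congr' <| hh0.mono fun x hx => by field_simp; ring

end

theorem tendsto_taylor_remainder_div_sq {f f' : ℝ → ℝ} {a f'' : ℝ}
    (hf : ∀ᶠ x in 𝓝 a, HasDerivAt f (f' x) x) (hf' : HasDerivAt f' f'' a) :
    Tendsto (fun h => (f (a + h) - f a - f' a * h) / h ^ 2) (𝓝[≠] 0) (𝓝 (f'' / 2)) := by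
  have hf₀ : ∀ᶠ h in 𝓝 (0 : ℝ), HasDerivAt (fun h => f (a + h) - f a - f' a * h)
      (f' (a + h) - f' a) h := by
    have : Tendsto (a + ·) (𝓝 (0 : ℝ)) (𝓝 a) := by
      simpa using tendsto_const_nhds.add tendsto_id (x := 𝓝 (0 : ℝ)) (a := a)
    filter_upwards [this.eventually hf] with h hh
    simpa using ((hh.comp_const_add a h).sub_const (f a)).fun_sub
      ((hasDerivAt_id' h).const_mul (f' a))
  refine HasDerivAt.lhopital_zero_nhdsNE
    (f' := fun h => f' (a + h) - f' a) (g' := fun h => 2 * h)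
    (eventually_nhdsWithin_of_eventually_nhds hf₀)
    (.of_forall fun h => by simpa using hasDerivAt_pow 2 h)
    (eventually_nhdsWithin_of_forall fun h hh => mul_ne_zero two_ne_zero hh) ?_ ?_ ?_
  · simpa using hf₀.self_of_nhds.continuousAt.tendsto.mono_left nhdsWithin_le_nhds
  · simpa using ((continuous_pow 2).tendsto (0 : ℝ)).mono_left nhdsWithin_le_nhds
  · refine (hf'.tendsto_slope_zero.div_const 2).congr fun h => ?_
    simp only [smul_eq_mul]
    ring

theorem tendsto_neg_nhdsNE_zero {G : Type*} [TopologicalSpace G] [AddGroup G]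
    [IsTopologicalAddGroup G] : Tendsto (fun x : G => -x) (𝓝[≠] 0) (𝓝[≠] 0) := by
  rw [Tendsto, Filter.map_neg, Filter.neg_nhdsNE, neg_zero]

theorem eventually_hasDerivAt_integral {ω : ℝ → ℝ} {t : ℝ} (h : ∀ᶠ x in 𝓝 t, ContinuousAt ω x) :
    ∀ᶠ x in 𝓝 t, HasDerivAt (fun x => ∫ τ in t..x, ω τ) (ω x) x := by
  obtain ⟨ε, hε, hball⟩ := Metric.eventually_nhds_iff_ball.mp h
  have hcont : ContinuousOn ω (Metric.ball t ε) := fun x hx => (hball x hx).continuousWithinAt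
  filter_upwards [Metric.ball_mem_nhds t hε] with x hx
  have hsub := (convex_ball t ε).ordConnected.uIcc_subset (Metric.mem_ball_self hε) hx
  exact intervalIntegral.integral_hasDerivAt_right (hcont.mono hsub).intervalIntegrable
    (hcont.stronglyMeasurableAtFilter Metric.isOpen_ball x hx) (hball x hx)

/-- lim_{Δt→0⁺} (1/Δt)·ln(sin β₊/sin β₋) = ω̇(t)/ω(t), where
β₊ = ∫_t^{t+Δt} ω and β₋ = −∫_t^{t−Δt} ω. -/
theorem stmt13 (ω : ℝ → ℝ) (t : ℝ) (hω : ContDiffAt ℝ 1 ω t) (hωt : ω t ≠ 0) :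
    Filter.Tendsto (fun Δt : ℝ =>
        (1/Δt) * Real.log (Real.sin (∫ τ in t..(t+Δt), ω τ)
          / Real.sin (-(∫ τ in t..(t-Δt), ω τ))))
      (nhdsWithin 0 (Set.Ioi 0)) (nhds (deriv ω t / ω t)) := by
  set F : ℝ → ℝ := fun x => ∫ τ in t..x, ω τ
  have hF : ∀ᶠ x in 𝓝 t, HasDerivAt F (ω x) x :=
    eventually_hasDerivAt_integral <| (hω.eventually (by simp)).mono fun x hx => hx.continuousAt
  have hF0 : F t = 0 := intervalIntegral.integral_same
  have hright := tendsto_taylor_remainder_div_sq hF (hω.differentiableAt one_ne_zero).hasDerivAt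
  have hleft := hright.comp tendsto_neg_nhdsNE_zero
  have hslope := hF.self_of_nhds.tendsto_slope_zero
  have hne : ∀ᶠ h in 𝓝[≠] (0 : ℝ), h ≠ 0 := self_mem_nhdsWithin
  have hβ₁ : (fun h => F (t + h)) =O[𝓝[≠] 0] fun h => h :=
    isBigO_of_div_tendsto_nhds (hne.mono fun x hx h0 => absurd h0 hx) (ω t) <|
      hslope.congr fun h => by simp [hF0, div_eq_inv_mul]
  have hβ₂ : Tendsto (fun h => -F (t - h) / h) (𝓝[≠] 0) (𝓝 (ω t)) :=
    (hslope.comp tendsto_neg_nhdsNE_zero).congr fun h => by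
      simp [hF0, div_eq_inv_mul, sub_eq_add_neg]
  have hβ₁₂ : Tendsto (fun h => (F (t + h) - -F (t - h)) / h ^ 2) (𝓝[≠] 0)
      (𝓝 (deriv ω t)) := by
    rw [← add_halves (deriv ω t)]
    refine (hright.add hleft).congr fun h => ?_
    simp only [Function.comp_apply, hF0, neg_sq, sub_eq_add_neg]
    ring
  refine ((tendsto_log_sin_div_sin_div (tendsto_id.mono_left nhdsWithin_le_nhds) hne hβ₁ hβ₂
    hωt hβ₁₂).mono_left (nhdsWithin_mono _ fun x hx => ne_of_gt hx)).congr fun h => ?_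
  simp only [F, id, one_div, inv_mul_eq_div]
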